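/- arXiv:1307.7414 — 7 statements merged into one kernel-verified Lean document; each statement's English description precedes it below -/
import Mathlib

section
/- Let R be a ring and let κ ≥ |R| be an infinite cardinal. Let h : M₁ → M₂ be a homomorphism of left R-modules and let X₁ ⊆ M₁ and X₂ ⊆ M₂ be subsets with |X₁| ≤ κ and |X₂| ≤ κ. Then there exist submodules M₁' ⊆ M₁ and M₂' ⊆ M₂ such that: (i) M₁' is a pure submodule of M₁ and M₂' is a pure submodule of M₂; (ii) X₁ ⊆ M₁', X₂ ⊆ M₂', and h(M₁') ⊆ M₂'; (iii) |M₁'| ≤ κ and |M₂'| ≤ κ. -/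
/-!
A Löwenheim–Skolem closure argument. Over a submodule `S` with `|S| ≤ κ` there are at most `κ`
finite linear systems with constants in `S`; adjoining one solution in `M` of each solvable one
and taking the span gives a submodule `T ⊇ S`, again of size at most `κ`. Iterating this
countably often, the union of the chain is pure, since any single system has its finitely many
constants in some stage and a solution in the next one. For `h : M₁ → M₂`, first close up `X₁`
to a pure `M₁'`, then close up `X₂ ∪ h(M₁')`, which still has size at most `κ`.
-/

universe u

/-- A submodule `P ≤ M` is *pure* if every finite system of `R`-linear equations with
constants in `P` which is solvable in `M` is already solvable in `P` (this is the standard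
equational characterization, over an arbitrary ring, of the requirement that
`L ⊗_R P → L ⊗_R M` be injective for every right `R`-module `L`). -/
def IsPureSubmodule {R : Type u} [Ring R] {M : Type u} [AddCommGroup M] [Module R M]
    (P : Submodule R M) : Prop :=
  ∀ (m n : ℕ) (A : Matrix (Fin m) (Fin n) R) (b : Fin m → P),
    (∃ y : Fin n → M, ∀ i, ∑ j, A i j • y j = (b i : M)) →
    ∃ z : Fin n → P, ∀ i, ∑ j, A i j • z j = b i

universe v

open Cardinal

section CardinalBounds

variable {κ : Cardinal.{u}}

theorem Cardinal.mk_finset_le_of_le (hκ : ℵ₀ ≤ κ) {α : Type u} (hα : #α ≤ κ) :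
    #(Finset α) ≤ κ :=
  calc #(Finset α) ≤ #(Multiset α) := mk_le_of_injective Finset.val_injective
    _ ≤ #(List α) := mk_quotient_le
    _ ≤ κ := (mk_list_le_max α).trans (max_le hκ hα)

theorem Cardinal.mk_fin_arrow_le_of_le (hκ : ℵ₀ ≤ κ) {α : Type u} (hα : #α ≤ κ) (n : ℕ) :
    #(Fin n → α) ≤ κ :=
  (mk_le_of_injective List.ofFn_injective).trans ((mk_list_le_max α).trans (max_le hκ hα))

theorem Cardinal.mk_iUnion_le_of_le {α ι : Type u} {f : ι → Set α} (hκ : ℵ₀ ≤ κ)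
    (hι : #ι ≤ κ) (hf : ∀ i, #(f i) ≤ κ) : #(⋃ i, f i) ≤ κ :=
  (mk_iUnion_le f).trans (mul_le_of_le hκ hι (ciSup_le' hf))

theorem Cardinal.mk_iUnion_le_of_countable {α : Type u} {ι : Type v} [Countable ι]
    {f : ι → Set α} (hκ : ℵ₀ ≤ κ) (hf : ∀ i, #(f i) ≤ κ) : #(⋃ i, f i) ≤ κ := by
  have hκ' : ℵ₀ ≤ lift.{v} κ := by simpa using hκ
  have hι : lift.{u} #ι ≤ lift.{v} κ := (lift_le_aleph0.2 mk_le_aleph0).trans hκ'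
  have hsup : ⨆ i, lift.{v} #(f i) ≤ lift.{v} κ := ciSup_le' fun i => lift_le.2 (hf i)
  rw [← lift_le.{v}]
  exact (mk_iUnion_le_lift f).trans (mul_le_of_le hκ' hι hsup)

end CardinalBounds

namespace Submodule

variable {R : Type u} [Ring R] {M : Type u} [AddCommGroup M] [Module R M] {κ : Cardinal.{u}}

theorem mk_span_le_of_le (hκ : ℵ₀ ≤ κ) (hR : #R ≤ κ) {s : Set M} (hs : #s ≤ κ) :
    #(span R s) ≤ κ := by
  rw [Finsupp.span_eq_range_linearCombination]
  calc #(LinearMap.range (Finsupp.linearCombination R ((↑) : s → M)))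
      ≤ #(s →₀ R) := mk_le_of_surjective (LinearMap.surjective_rangeRestrict _)
    _ ≤ #(Finset (s × R)) := mk_le_of_injective (Finsupp.graph_injective _ _)
    _ ≤ κ := mk_finset_le_of_le hκ (by simpa using mul_le_of_le hκ hs hR)

theorem mk_iSup_le_of_countable {ι : Type*} [Countable ι] (hκ : ℵ₀ ≤ κ) (hR : #R ≤ κ)
    {S : ι → Submodule R M} (hS : ∀ i, #(S i) ≤ κ) : #(⨆ i, S i : Submodule R M) ≤ κ := by
  rw [iSup_eq_span]
  exact mk_span_le_of_le hκ hR (mk_iUnion_le_of_countable hκ hS)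

def HasSolutionsIn (S T : Submodule R M) : Prop :=
  ∀ (m n : ℕ) (A : Matrix (Fin m) (Fin n) R) (b : Fin m → S),
    (∃ y : Fin n → M, ∀ i, ∑ j, A i j • y j = (b i : M)) →
    ∃ z : Fin n → T, ∀ i, ∑ j, A i j • (z j : M) = b i

theorem exists_hasSolutionsIn_mk_le (hκ : ℵ₀ ≤ κ) (hR : #R ≤ κ) {S : Submodule R M}
    (hS : #S ≤ κ) : ∃ T : Submodule R M, S ≤ T ∧ HasSolutionsIn S T ∧ #T ≤ κ := by
  have hsol : ∀ (p : ℕ × ℕ) (t : Matrix (Fin p.1) (Fin p.2) R × (Fin p.1 → S)),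
      ∃ z : Fin p.2 → M, (∃ y : Fin p.2 → M, ∀ i, ∑ j, t.1 i j • y j = (t.2 i : M)) →
        ∀ i, ∑ j, t.1 i j • z j = (t.2 i : M) :=
    fun _ _ => ⟨Classical.epsilon _, Classical.epsilon_spec⟩
  choose sol hsol using hsol
  let U : Set M := ⋃ p, ⋃ t, Set.range (sol p t)
  refine ⟨span R (S ∪ U), fun x hx => subset_span (Or.inl hx), ?_, ?_⟩
  · intro m n A b hb
    exact ⟨fun j => ⟨sol (m, n) (A, b) j, subset_span <| Or.inr <|
      Set.mem_iUnion₂.2 ⟨(m, n), (A, b), j, rfl⟩⟩, hsol (m, n) (A, b) hb⟩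
  · have hsystems (p : ℕ × ℕ) : #(Matrix (Fin p.1) (Fin p.2) R × (Fin p.1 → S)) ≤ κ := by
      rw [mk_prod, lift_id, lift_id]
      exact mul_le_of_le hκ (mk_fin_arrow_le_of_le hκ (mk_fin_arrow_le_of_le hκ hR p.2) p.1)
        (mk_fin_arrow_le_of_le hκ hS p.1)
    have hU : #U ≤ κ := mk_iUnion_le_of_countable hκ fun p =>
      mk_iUnion_le_of_le hκ (hsystems p) fun _ => (Set.finite_range _).lt_aleph0.le.trans hκ
    exact mk_span_le_of_le hκ hR ((mk_union_le _ _).trans (add_le_of_le hκ hS hU))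

theorem isPureSubmodule_iSup_of_monotone {S : ℕ → Submodule R M} (hS : Monotone S)
    (hsol : ∀ k, HasSolutionsIn (S k) (S (k + 1))) : IsPureSubmodule (⨆ k, S k) := by
  intro m n A b hb
  have hmem (i : Fin m) : ∃ k, (b i : M) ∈ S k := (mem_iSup_of_chain ⟨S, hS⟩ _).1 (b i).2
  choose k hk using hmem
  let N := Finset.univ.sup k
  obtain ⟨z, hz⟩ :=
    hsol N m n A (fun i => ⟨b i, hS (Finset.le_sup (Finset.mem_univ i)) (hk i)⟩) hb
  exact ⟨fun j => ⟨z j, le_iSup S (N + 1) (z j).2⟩, fun i => Subtype.ext (by simpa using hz i)⟩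

theorem exists_isPureSubmodule_superset_mk_le (hκ : ℵ₀ ≤ κ) (hR : #R ≤ κ) {X : Set M}
    (hX : #X ≤ κ) : ∃ P : Submodule R M, IsPureSubmodule P ∧ X ⊆ P ∧ #P ≤ κ := by
  have hstep (S : {S : Submodule R M // #S ≤ κ}) :
      ∃ T : {T : Submodule R M // #T ≤ κ}, S.1 ≤ T.1 ∧ HasSolutionsIn S.1 T.1 :=
    let ⟨T, hle, hsol, hT⟩ := exists_hasSolutionsIn_mk_le hκ hR S.2
    ⟨⟨T, hT⟩, hle, hsol⟩
  choose next hle hsol using hstep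
  let S (k : ℕ) : {S : Submodule R M // #S ≤ κ} :=
    next^[k] ⟨span R X, mk_span_le_of_le hκ hR hX⟩
  have hsucc (k : ℕ) : S (k + 1) = next (S k) := Function.iterate_succ_apply' _ _ _
  have hmono : Monotone fun k => (S k).1 := monotone_nat_of_le_succ fun k => hsucc k ▸ hle _
  exact ⟨⨆ k, (S k).1, isPureSubmodule_iSup_of_monotone hmono fun k => hsucc k ▸ hsol _,
    subset_span.trans (le_iSup (fun k => (S k).1) 0),
    mk_iSup_le_of_countable hκ hR fun k => (S k).2⟩

end Submodule

/-- Given `κ ≥ |R|` infinite, a homomorphism `h : M₁ → M₂` and subsets `X₁ ⊆ M₁`, `X₂ ⊆ M₂`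
of cardinality at most `κ`, there is a subrepresentation `M₁' → M₂'` with `M₁'`, `M₂'`
pure submodules containing `X₁`, `X₂` respectively, `h(M₁') ⊆ M₂'`, and both of
cardinality at most `κ`. -/
theorem exists_pure_subrepresentation
    {R : Type u} [Ring R] (κ : Cardinal.{u}) (hκ : Cardinal.aleph0 ≤ κ)
    (hR : Cardinal.mk R ≤ κ)
    {M₁ M₂ : Type u} [AddCommGroup M₁] [AddCommGroup M₂] [Module R M₁] [Module R M₂]
    (h : M₁ →ₗ[R] M₂) (X₁ : Set M₁) (X₂ : Set M₂)
    (hX₁ : Cardinal.mk X₁ ≤ κ) (hX₂ : Cardinal.mk X₂ ≤ κ) :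
    ∃ (M₁' : Submodule R M₁) (M₂' : Submodule R M₂),
      IsPureSubmodule M₁' ∧ IsPureSubmodule M₂' ∧
      X₁ ⊆ (M₁' : Set M₁) ∧ X₂ ⊆ (M₂' : Set M₂) ∧
      (∀ x ∈ M₁', h x ∈ M₂') ∧
      Cardinal.mk M₁' ≤ κ ∧ Cardinal.mk M₂' ≤ κ := by
  obtain ⟨M₁', hpure₁, hX₁M₁', hcard₁⟩ :=
    Submodule.exists_isPureSubmodule_superset_mk_le hκ hR hX₁
  have hY : #(X₂ ∪ h '' M₁' : Set M₂) ≤ κ :=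
    (mk_union_le _ _).trans (add_le_of_le hκ hX₂ (mk_image_le.trans hcard₁))
  obtain ⟨M₂', hpure₂, hYM₂', hcard₂⟩ :=
    Submodule.exists_isPureSubmodule_superset_mk_le hκ hR hY
  exact ⟨M₁', M₂', hpure₁, hpure₂, hX₁M₁', Set.subset_union_left.trans hYM₂',
    fun x hx => hYM₂' (Or.inr ⟨x, hx, rfl⟩), hcard₁, hcard₂⟩
end

section
/- Let R be a ring and let κ ≥ |R| be an infinite cardinal. Let f : F₁ → F₂ be a phantom morphism of left R-modules and let X₁ ⊆ F₁ and X₂ ⊆ F₂ be subsets with |X₁| ≤ κ and |X₂| ≤ κ. Then there exist submodules S₁ ⊆ F₁ and S₂ ⊆ F₂ such that S₁ is a pure submodule of F₁, S₂ is a pure submodule of F₂, X₁ ⊆ S₁, X₂ ⊆ S₂, f(S₁) ⊆ S₂, |S₁| ≤ κ, |S₂| ≤ κ, and the restriction f|_{S₁} : S₁ → S₂ is a phantom morphism. -/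
universe u

/-- A morphism `f : M → N` of left `R`-modules is *phantom* if for every finitely presented
left `R`-module `L` and every homomorphism `g : L → M`, the composition `f ∘ g` factors
through a projective left `R`-module. -/
def IsPhantom {R : Type u} [Ring R] {M N : Type u} [AddCommGroup M] [AddCommGroup N]
    [Module R M] [Module R N] (f : M →ₗ[R] N) : Prop :=
  ∀ (L : Type u) [AddCommGroup L] [Module R L] [Module.FinitePresentation R L]
    (g : L →ₗ[R] M),
    ∃ (P : Type u) (_ : AddCommGroup P) (_ : Module R P) (_ : Module.Projective R P)
      (α : L →ₗ[R] P) (β : P →ₗ[R] N), β.comp α = f.comp g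

open Cardinal

section auxiliary

variable {R : Type u} [Ring R] {M : Type u} [AddCommGroup M] [Module R M]

lemma mk_fin_fun_le {X : Type u} {κ : Cardinal.{u}} (hκ : ℵ₀ ≤ κ) (hX : #X ≤ κ) (n : ℕ) :
    #(Fin n → X) ≤ κ := by
  refine le_trans (mk_le_of_injective (List.ofFn_injective (α := X) (n := n))) ?_
  exact le_trans (mk_list_le_max X) (max_le hκ hX)

lemma mk_span_le' {κ : Cardinal.{u}} (hκ : ℵ₀ ≤ κ) (hR : #R ≤ κ) (s : Set M) (hs : #s ≤ κ) :
    #(Submodule.span R s) ≤ κ := by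
  have hsurj : Function.Surjective
      (fun v : (s →₀ R) => (⟨Finsupp.linearCombination R (Subtype.val : s → M) v, by
        have : Finsupp.linearCombination R (Subtype.val : s → M) v ∈
            LinearMap.range (Finsupp.linearCombination R (Subtype.val : s → M)) :=
          LinearMap.mem_range_self _ _
        rwa [Finsupp.range_linearCombination, Subtype.range_coe] at this⟩ :
        Submodule.span R s)) := by
    rintro ⟨x, hx⟩
    rw [← Subtype.range_coe (s := s), ← Finsupp.range_linearCombination] at hx
    obtain ⟨v, hv⟩ := hx
    exact ⟨v, Subtype.ext hv⟩
  refine le_trans (mk_le_of_surjective hsurj) ?_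
  refine le_trans (mk_le_of_injective (Finsupp.graph_injective s R)) ?_
  rcases finite_or_infinite (s × R) with h | h
  · haveI := Fintype.ofFinite (s × R)
    exact le_trans (le_of_lt (lt_aleph0_of_finite _)) hκ
  · rw [mk_finset_of_infinite, mk_prod, lift_id, lift_id]
    calc #s * #R ≤ κ * κ := mul_le_mul' hs hR
    _ = κ := mul_eq_self hκ

section step
variable {R : Type u} [Ring R] {M : Type u} [AddCommGroup M] [Module R M]

/-- The "solvability in the submodule" property, phrased at the level of `M`. -/
def SolProp (P Q : Submodule R M) : Prop :=
  ∀ (m n : ℕ) (A : Matrix (Fin m) (Fin n) R) (b : Fin m → M), (∀ i, b i ∈ P) →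
    (∃ y : Fin n → M, ∀ i, ∑ j, A i j • y j = b i) →
    ∃ z : Fin n → M, (∀ j, z j ∈ Q) ∧ ∀ i, ∑ j, A i j • z j = b i

lemma isPureSubmodule_of_solProp {P : Submodule R M} (h : SolProp P P) :
    IsPureSubmodule P := by
  intro m n A b hsolv
  obtain ⟨z, hzP, hz⟩ := h m n A (fun i => (b i : M)) (fun i => (b i).2) hsolv
  refine ⟨fun j => ⟨z j, hzP j⟩, fun i => ?_⟩
  refine Subtype.ext ?_
  rw [← hz i]
  push_cast
  rfl
end step

section step2
variable {R : Type u} [Ring R] {M : Type u} [AddCommGroup M] [Module R M]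

/-- Index type for finite systems of linear equations with constants in `S`. -/
def SysIdx (S : Submodule R M) : Type u :=
  Σ mn : ULift.{u} (ℕ × ℕ), Matrix (Fin mn.down.1) (Fin mn.down.2) R × (Fin mn.down.1 → S)

open scoped Classical in
noncomputable def solFun (S : Submodule R M) (σ : SysIdx S) : Fin σ.1.down.2 → M :=
  if h : ∃ y : Fin σ.1.down.2 → M,
      ∀ i, ∑ j, σ.2.1 i j • y j = (σ.2.2 i : M) then h.choose else 0

noncomputable def pureStep (S : Submodule R M) : Submodule R M :=
  S ⊔ Submodule.span R (⋃ σ : SysIdx S, Set.range (solFun S σ))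

lemma le_pureStep (S : Submodule R M) : S ≤ pureStep S := le_sup_left

lemma solProp_pureStep (S : Submodule R M) : SolProp S (pureStep S) := by
  intro m n A b hb hsolv
  set σ : SysIdx S := ⟨⟨(m, n)⟩, A, fun i => ⟨b i, hb i⟩⟩ with hσ
  have hex : ∃ y : Fin n → M, ∀ i, ∑ j, A i j • y j = ((⟨b i, hb i⟩ : S) : M) := hsolv
  refine ⟨hex.choose, fun j => ?_, fun i => hex.choose_spec i⟩
  have hmem : hex.choose j ∈ Set.range (solFun S σ) := by
    have heq : solFun S σ = hex.choose := by
      rw [solFun]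
      exact dif_pos hex
    rw [heq]
    exact Set.mem_range_self j
  exact Submodule.mem_sup_right (Submodule.subset_span (Set.mem_iUnion.2 ⟨σ, hmem⟩))

lemma mk_pureStep_le {κ : Cardinal.{u}} (hκ : ℵ₀ ≤ κ) (hR : #R ≤ κ)
    {S : Submodule R M} (hS : #S ≤ κ) : #(pureStep S) ≤ κ := by
  have hIdx : #(SysIdx S) ≤ κ := by
    rw [SysIdx, mk_sigma]
    have hcomp : ∀ mn : ULift.{u} (ℕ × ℕ),
        #(Matrix (Fin mn.down.1) (Fin mn.down.2) R × (Fin mn.down.1 → S)) ≤ κ := by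
      intro mn
      rw [mk_prod, lift_id, lift_id]
      have h1 : #(Matrix (Fin mn.down.1) (Fin mn.down.2) R) ≤ κ :=
        mk_fin_fun_le hκ (mk_fin_fun_le hκ hR _) _
      calc _ ≤ κ * κ := mul_le_mul' h1 (mk_fin_fun_le hκ hS _)
      _ = κ := mul_eq_self hκ
    calc Cardinal.sum (fun mn : ULift.{u} (ℕ × ℕ) => #(Matrix (Fin mn.down.1) (Fin mn.down.2) R × (Fin mn.down.1 → S)))
        ≤ Cardinal.sum (fun _ : ULift.{u} (ℕ × ℕ) => κ) := Cardinal.sum_le_sum _ _ hcomp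
      _ = #(ULift.{u} (ℕ × ℕ)) * κ := Cardinal.sum_const' _ _
      _ ≤ κ * κ := mul_le_mul' (by simp [mk_uLift]; exact le_trans (le_of_eq (by simp)) hκ) le_rfl
      _ = κ := mul_eq_self hκ
  have hsol : #(⋃ σ : SysIdx S, Set.range (solFun S σ)) ≤ κ := by
    refine le_trans (mk_iUnion_le _) ?_
    have : ⨆ σ : SysIdx S, #(Set.range (solFun S σ)) ≤ κ := by
      refine ciSup_le' fun σ => ?_
      haveI := (Set.finite_range (solFun S σ)).to_subtype
      exact le_trans (le_of_lt (lt_aleph0_of_finite _)) hκ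
    calc _ ≤ κ * κ := mul_le_mul' hIdx this
    _ = κ := mul_eq_self hκ
  have : pureStep S = Submodule.span R ((S : Set M) ∪ ⋃ σ : SysIdx S, Set.range (solFun S σ)) := by
    rw [Submodule.span_union, Submodule.span_eq, pureStep]
  rw [this]
  refine mk_span_le' hκ hR _ ?_
  refine le_trans (mk_union_le _ _) ?_
  calc #(S : Set M) + _ ≤ κ + κ := add_le_add hS hsol
  _ = κ := add_eq_self hκ
end step2

section chain
variable {R : Type u} [Ring R] {M : Type u} [AddCommGroup M] [Module R M]

lemma exists_of_mem_iSup_chain {S : ℕ → Submodule R M} (mono : Monotone S) {x : M}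
    (hx : x ∈ ⨆ k, S k) : ∃ k, x ∈ S k := by
  have e0 : ((⨆ k, S k : Submodule R M) : Set M) = ⋃ k, (S k : Set M) :=
    Submodule.coe_iSup_of_chain ⟨S, mono⟩
  rw [← SetLike.mem_coe, e0, Set.mem_iUnion] at hx
  exact hx

lemma isPure_iSup_of_chain {S : ℕ → Submodule R M} (mono : Monotone S)
    (hstep : ∀ k, SolProp (S k) (S (k + 1))) : IsPureSubmodule (⨆ k, S k) := by
  refine isPureSubmodule_of_solProp ?_
  intro m n A b hb hsolv
  have hmem : ∀ i, ∃ k, b i ∈ S k := by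
    intro i
    have h := hb i
    have e0 : ((⨆ k, S k : Submodule R M) : Set M) = ⋃ k, (S k : Set M) :=
      Submodule.coe_iSup_of_chain ⟨S, mono⟩
    rw [← SetLike.mem_coe, e0, Set.mem_iUnion] at h
    exact h
  choose k hk using hmem
  obtain ⟨z, hz1, hz2⟩ := hstep (Finset.univ.sup k) m n A b
    (fun i => mono (Finset.le_sup (Finset.mem_univ i)) (hk i)) hsolv
  exact ⟨z, fun j => (le_iSup S (Finset.univ.sup k + 1)) (hz1 j), hz2⟩

lemma mk_iSup_le_of_chain {κ : Cardinal.{u}} (hκ : ℵ₀ ≤ κ) {S : ℕ → Submodule R M}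
    (mono : Monotone S) (h : ∀ k, #(S k) ≤ κ) : #(↥(⨆ k, S k)) ≤ κ := by
  have e : ((⨆ k, S k : Submodule R M) : Set M) = ⋃ k : ULift.{u} ℕ, (S k.down : Set M) := by
    have e0 : ((⨆ k, S k : Submodule R M) : Set M) = ⋃ k, (S k : Set M) :=
      Submodule.coe_iSup_of_chain ⟨S, mono⟩
    rw [e0]
    ext x
    simp only [Set.mem_iUnion]
    exact ⟨fun ⟨k, hh⟩ => ⟨⟨k⟩, hh⟩, fun ⟨k, hh⟩ => ⟨k.down, hh⟩⟩
  refine le_trans (le_of_eq (mk_congr (Equiv.setCongr e))) ?_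
  refine le_trans (mk_iUnion_le _) ?_
  have h1 : #(ULift.{u} ℕ) ≤ κ := by rw [mk_uLift, mk_nat]; exact le_trans (by simp) hκ
  have h2 : ⨆ k : ULift.{u} ℕ, #(S k.down : Set M) ≤ κ := ciSup_le' fun k => h k.down
  calc _ ≤ κ * κ := mul_le_mul' h1 h2
  _ = κ := mul_eq_self hκ

lemma mk_sup_le {κ : Cardinal.{u}} (hκ : ℵ₀ ≤ κ) (hR : #R ≤ κ) {A B : Submodule R M}
    (hA : #A ≤ κ) (hB : #B ≤ κ) : #(A ⊔ B : Submodule R M) ≤ κ := by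
  have e : A ⊔ B = Submodule.span R ((A : Set M) ∪ (B : Set M)) := by
    rw [Submodule.span_union, Submodule.span_eq, Submodule.span_eq]
  rw [e]
  refine mk_span_le' hκ hR _ (le_trans (mk_union_le _ _) ?_)
  calc #(A : Set M) + #(B : Set M) ≤ κ + κ := add_le_add hA hB
  _ = κ := add_eq_self hκ

lemma mk_map_le {M₂ : Type u} [AddCommGroup M₂] [Module R M₂] (f : M →ₗ[R] M₂)
    (A : Submodule R M) : #(Submodule.map f A) ≤ #A := by
  refine mk_le_of_surjective (f := fun a : A => (⟨f a, Submodule.mem_map_of_mem a.2⟩ :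
    Submodule.map f A)) ?_
  rintro ⟨y, x, hx, rfl⟩
  exact ⟨⟨x, hx⟩, rfl⟩
end chain

section phantom
variable {R : Type u} [Ring R] {F₁ F₂ : Type u} [AddCommGroup F₁] [AddCommGroup F₂]
  [Module R F₁] [Module R F₂]

lemma isPhantom_restrict (f : F₁ →ₗ[R] F₂) (hf : IsPhantom f)
    {S₁ : Submodule R F₁} {S₂ : Submodule R F₂} (hsub : ∀ x ∈ S₁, f x ∈ S₂)
    (hpure : IsPureSubmodule S₂) : IsPhantom (f.restrict hsub) := by
  intro L _ _ _ g
  obtain ⟨P, _, _, hP, α, β, hβα⟩ := hf L (S₁.subtype.comp g)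
  obtain ⟨t, ht⟩ := Module.Finite.fg_top (R := R) (M := L)
  set m := t.card with hm
  set l : Fin m → L := fun k => (t.equivFin.symm k : L) with hldef
  have hl : Submodule.span R (Set.range l) = ⊤ := by
    have h1 : Set.range l = (t : Set L) := by
      ext x
      constructor
      · rintro ⟨k, rfl⟩; exact (t.equivFin.symm k).2
      · intro hx; exact ⟨t.equivFin ⟨x, hx⟩, by simp [hldef]⟩
    rw [h1, ht]
  classical
  obtain ⟨s, hs⟩ := Module.projective_def'.mp hP
  set π : (P →₀ R) →ₗ[R] P := Finsupp.linearCombination R id with hπ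
  set T : Finset P := Finset.univ.sup (fun k : Fin m => (s (α (l k))).support) with hT
  set n := T.card with hn
  set e : Fin n ≃ T := T.equivFin.symm with he
  set A : Matrix (Fin m) (Fin n) R := fun k j => (s (α (l k))) (e j : P) with hA
  set c : Fin n → F₂ := fun j => β (π (Finsupp.single ((e j : P)) 1)) with hc
  have hsupp : ∀ k, (s (α (l k))).support ⊆ T := fun k =>
    Finset.le_sup (f := fun k : Fin m => (s (α (l k))).support) (Finset.mem_univ k)
  have hrecon : ∀ k, ∑ j : Fin n, Finsupp.single ((e j : P)) (A k j) = s (α (l k)) := by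
    intro k
    have h1 : ∑ j : Fin n, Finsupp.single ((e j : P)) (A k j)
        = ∑ p : T, Finsupp.single (p : P) ((s (α (l k))) (p : P)) :=
      Equiv.sum_comp e (fun p : T => Finsupp.single (p : P) ((s (α (l k))) (p : P)))
    rw [h1, Finset.sum_coe_sort T (fun p => Finsupp.single p ((s (α (l k))) p))]
    rw [← Finset.sum_subset (hsupp k) (fun x _ hx => by
      rw [Finsupp.notMem_support_iff.mp hx, Finsupp.single_zero])]
    exact Finsupp.sum_single _
  have hwit : ∀ k, ∑ j : Fin n, A k j • c j = f ((g (l k) : F₁)) := by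
    intro k
    have h1 : ∑ j : Fin n, A k j • c j
        = β (π (∑ j : Fin n, Finsupp.single ((e j : P)) (A k j))) := by
      rw [map_sum, map_sum]
      refine Finset.sum_congr rfl fun j _ => ?_
      rw [← Finsupp.smul_single_one, map_smul, map_smul]
    rw [h1, hrecon k]
    have h2 : π (s (α (l k))) = α (l k) := by
      have := DFunLike.congr_fun hs (α (l k))
      simpa [hπ] using this
    rw [h2]
    exact DFunLike.congr_fun hβα (l k)
  have hbmem : ∀ k, f ((g (l k) : F₁)) ∈ S₂ := fun k => hsub _ (g (l k)).2
  obtain ⟨z, hz⟩ := hpure m n A (fun k => ⟨f ((g (l k) : F₁)), hbmem k⟩) ⟨c, hwit⟩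
  refine ⟨Fin n → R, inferInstance, inferInstance, inferInstance,
    (LinearMap.pi (fun j => Finsupp.lapply ((e j : P)))).comp (s.comp α),
    { toFun := fun v => ∑ j : Fin n, v j • z j
      map_add' := by intro v w; simp [add_smul, Finset.sum_add_distrib]
      map_smul' := by intro r v; simp [mul_smul, Finset.smul_sum] }, ?_⟩
  refine LinearMap.ext_on_range hl ?_
  intro k
  refine Subtype.ext ?_
  have hL : ((∑ j : Fin n, A k j • z j : S₂) : F₂) = f ((g (l k) : F₁)) := by
    rw [hz k]
  simpa using hL
end phantom

end auxiliary

lemma SolProp.mono {R : Type u} [Ring R] {M : Type u} [AddCommGroup M] [Module R M]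
    {P Q Q' : Submodule R M} (h : SolProp P Q) (hQ : Q ≤ Q') : SolProp P Q' :=
  fun m n A b hb hs => by
    obtain ⟨z, hz1, hz2⟩ := h m n A b hb hs
    exact ⟨z, fun j => hQ (hz1 j), hz2⟩

/-- Given `κ ≥ |R|` infinite, a phantom morphism `f : F₁ → F₂` and subsets `X₁ ⊆ F₁`,
`X₂ ⊆ F₂` of cardinality at most `κ`, there is a pure phantom subrepresentation
`S₁ → S₂` of `f` of cardinality at most `κ` containing `X₁` and `X₂`. -/
theorem exists_pure_phantom_subrepresentation
    {R : Type u} [Ring R] (κ : Cardinal.{u}) (hκ : Cardinal.aleph0 ≤ κ)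
    (hR : Cardinal.mk R ≤ κ)
    {F₁ F₂ : Type u} [AddCommGroup F₁] [AddCommGroup F₂] [Module R F₁] [Module R F₂]
    (f : F₁ →ₗ[R] F₂) (hf : IsPhantom f) (X₁ : Set F₁) (X₂ : Set F₂)
    (hX₁ : Cardinal.mk X₁ ≤ κ) (hX₂ : Cardinal.mk X₂ ≤ κ) :
    ∃ (S₁ : Submodule R F₁) (S₂ : Submodule R F₂) (hsub : ∀ x ∈ S₁, f x ∈ S₂),
      IsPureSubmodule S₁ ∧ IsPureSubmodule S₂ ∧
      X₁ ⊆ (S₁ : Set F₁) ∧ X₂ ⊆ (S₂ : Set F₂) ∧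
      Cardinal.mk S₁ ≤ κ ∧ Cardinal.mk S₂ ≤ κ ∧
      IsPhantom (f.restrict hsub) := by
  -- the two chains
  let Sq₁ : ℕ → Submodule R F₁ := fun k => Nat.recAux (Submodule.span R X₁)
    (fun _ S => pureStep S) k
  let Sq₂ : ℕ → Submodule R F₂ := fun k => Nat.recAux (Submodule.span R X₂)
    (fun k S => pureStep S ⊔ Submodule.map f (Sq₁ k)) k
  have hSq₁succ : ∀ k, Sq₁ (k + 1) = pureStep (Sq₁ k) := fun k => rfl
  have hSq₂succ : ∀ k, Sq₂ (k + 1) = pureStep (Sq₂ k) ⊔ Submodule.map f (Sq₁ k) := fun k => rfl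
  have mono₁ : Monotone Sq₁ := monotone_nat_of_le_succ fun k => le_pureStep _
  have mono₂ : Monotone Sq₂ := monotone_nat_of_le_succ fun k =>
    le_trans (le_pureStep _) le_sup_left
  refine ⟨⨆ k, Sq₁ k, ⨆ k, Sq₂ k, ?_, ?_, ?_, ?_, ?_, ?_, ?_, ?_⟩
  · -- hsub
    intro x hx
    obtain ⟨k, hk⟩ := exists_of_mem_iSup_chain mono₁ hx
    have : f x ∈ Sq₂ (k + 1) := by
      rw [hSq₂succ k]
      exact Submodule.mem_sup_right (Submodule.mem_map_of_mem hk)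
    exact le_iSup Sq₂ (k + 1) this
  · exact isPure_iSup_of_chain mono₁ fun k => solProp_pureStep (Sq₁ k)
  · exact isPure_iSup_of_chain mono₂ fun k =>
      (solProp_pureStep (Sq₂ k)).mono le_sup_left
  · exact le_trans Submodule.subset_span
      (SetLike.coe_subset_coe.2 (le_iSup Sq₁ 0 : Sq₁ 0 ≤ _))
  · exact le_trans Submodule.subset_span
      (SetLike.coe_subset_coe.2 (le_iSup Sq₂ 0 : Sq₂ 0 ≤ _))
  · refine mk_iSup_le_of_chain hκ mono₁ ?_
    intro k
    induction k with
    | zero => exact mk_span_le' hκ hR _ hX₁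
    | succ k ih => exact mk_pureStep_le hκ hR ih
  · have h₁ : ∀ k, #(↥(Sq₁ k)) ≤ κ := by
      intro k
      induction k with
      | zero => exact mk_span_le' hκ hR _ hX₁
      | succ k ih => exact mk_pureStep_le hκ hR ih
    refine mk_iSup_le_of_chain hκ mono₂ ?_
    intro k
    induction k with
    | zero => exact mk_span_le' hκ hR _ hX₂
    | succ k ih =>
        rw [hSq₂succ k]
        exact mk_sup_le hκ hR (mk_pureStep_le hκ hR ih) (le_trans (mk_map_le f _) (h₁ k))
  · refine isPhantom_restrict f hf _ ?_
    exact isPure_iSup_of_chain mono₂ fun k =>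
      (solProp_pureStep (Sq₂ k)).mono le_sup_left
end

section
/- Let R be a ring, let I be a directed index set, let (N_i, g_{ij}) and (M_i, h_{ij}) be directed systems of left R-modules over I, and let (f_i : N_i → M_i)_{i ∈ I} be a family of homomorphisms compatible with the transition maps (i.e., f_j ∘ g_{ij} = h_{ij} ∘ f_i for all i ≤ j) such that each f_i is a phantom morphism. Then the induced morphism lim f_i : lim N_i → lim M_i on the direct limits is a phantom morphism. -/
universe u

/-!
A finitely presented module `L` is compact: a map `L → lim N` factors through some `N i`, by
lifting the images of finitely many generators to a common stage and then passing to a later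
stage where the finitely many relations already hold. Composed with `F`, it then factors through
the phantom map `f i`.
-/

section IsPhantom

variable {R : Type u} [Ring R] {M N : Type u} [AddCommGroup M] [AddCommGroup N]
  [Module R M] [Module R N]

theorem isPhantom_zero : IsPhantom (0 : M →ₗ[R] N) := fun _ _ _ _ _ =>
  ⟨PUnit, inferInstance, inferInstance, inferInstance, 0, 0, rfl⟩

theorem IsPhantom.linearMap_comp {N' : Type u} [AddCommGroup N'] [Module R N']
    {f : M →ₗ[R] N} (hf : IsPhantom f) (k : N →ₗ[R] N') : IsPhantom (k ∘ₗ f) := by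
  intro L _ _ _ u
  obtain ⟨P, _, _, _, α, β, hβα⟩ := hf L u
  exact ⟨P, ‹_›, ‹_›, ‹_›, α, k ∘ₗ β, by rw [LinearMap.comp_assoc, hβα, LinearMap.comp_assoc]⟩

end IsPhantom

namespace Module.DirectLimit

variable {R : Type*} [Ring R] {ι : Type*} [Preorder ι] [IsDirectedOrder ι] [DecidableEq ι]
  {N : ι → Type*} [∀ i, AddCommGroup (N i)] [∀ i, Module R (N i)]
  {g : ∀ i j, i ≤ j → N i →ₗ[R] N j}
  {F : Type*} [AddCommGroup F] [Module R F]

theorem exists_of_comp_eq_of_free [Nonempty ι] [Module.Free R F] [Module.Finite R F]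
    (u : F →ₗ[R] DirectLimit N g) : ∃ (i : ι) (v : F →ₗ[R] N i), of R ι N g i ∘ₗ v = u := by
  let b := Module.Free.chooseBasis R F
  choose i y hy using fun k => exists_of (u (b k))
  obtain ⟨i₀, hi₀⟩ := Finite.exists_le i
  refine ⟨i₀, b.constr ℕ fun k => g (i k) i₀ (hi₀ k) (y k), b.ext fun k => ?_⟩
  simp only [LinearMap.comp_apply, Basis.constr_basis, of_f, hy]

theorem exists_comp_eq_zero_of_of_comp_eq_zero [DirectedSystem N fun i j h => g i j h]
    [Module.Finite R F] {i : ι} {v : F →ₗ[R] N i} (hv : of R ι N g i ∘ₗ v = 0) :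
    ∃ (j : ι) (hij : i ≤ j), g i j hij ∘ₗ v = 0 := by
  have : Nonempty ι := ⟨i⟩
  obtain ⟨s, hs⟩ := Module.Finite.fg_top (R := R) (M := F)
  choose j hij hj using fun x : s => of.zero_exact (LinearMap.congr_fun hv x)
  obtain ⟨k, hk⟩ := Finite.exists_le j
  obtain ⟨l, hil, hkl⟩ := exists_ge_ge i k
  refine ⟨l, hil, LinearMap.ext_on hs fun x hx => ?_⟩
  have hjl := (hk ⟨x, hx⟩).trans hkl
  simp only [LinearMap.comp_apply, LinearMap.zero_apply]
  rw [← DirectedSystem.map_map (f := fun i j h => g i j h) (hij ⟨x, hx⟩) hjl, hj, map_zero]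

theorem exists_of_comp_eq_of_finitePresentation [Nonempty ι]
    [DirectedSystem N fun i j h => g i j h] {L : Type*} [AddCommGroup L] [Module R L]
    [Module.FinitePresentation R L] (u : L →ₗ[R] DirectLimit N g) :
    ∃ (i : ι) (v : L →ₗ[R] N i), of R ι N g i ∘ₗ v = u := by
  obtain ⟨n, K, e, hK⟩ := Module.FinitePresentation.exists_fin R L
  obtain ⟨i, w, hw⟩ := exists_of_comp_eq_of_free (u ∘ₗ e.symm.toLinearMap ∘ₗ K.mkQ)
  have : Module.Finite R K := Module.Finite.iff_fg.mpr hK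
  obtain ⟨j, hij, hj⟩ := exists_comp_eq_zero_of_of_comp_eq_zero (v := w ∘ₗ K.subtype) <| by
    rw [← LinearMap.comp_assoc, hw]
    ext x
    simp [(Submodule.Quotient.mk_eq_zero K).mpr x.2]
  have hKw : K ≤ LinearMap.ker (g i j hij ∘ₗ w) := fun x hx => LinearMap.congr_fun hj ⟨x, hx⟩
  refine ⟨j, K.liftQ _ hKw ∘ₗ e.toLinearMap, LinearMap.ext fun x => ?_⟩
  obtain ⟨y, hy⟩ := K.mkQ_surjective (e x)
  calc of R ι N g j (K.liftQ _ hKw (e x)) = of R ι N g i (w y) := by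
        rw [← hy, Submodule.mkQ_apply, Submodule.liftQ_apply, LinearMap.comp_apply, of_f]
    _ = u x := by
        rw [← LinearMap.comp_apply (of R ι N g i), hw]
        simp [hy]

theorem isPhantom_of_forall_isPhantom_comp_of {R : Type u} [Ring R] {ι : Type u} [Preorder ι]
    [IsDirectedOrder ι] [DecidableEq ι] {N : ι → Type u} [∀ i, AddCommGroup (N i)]
    [∀ i, Module R (N i)] {g : ∀ i j, i ≤ j → N i →ₗ[R] N j}
    [DirectedSystem N fun i j h => g i j h] {X : Type u} [AddCommGroup X] [Module R X]
    (F : DirectLimit N g →ₗ[R] X) (hF : ∀ i, IsPhantom (F ∘ₗ of R ι N g i)) : IsPhantom F := by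
  intro L _ _ _ u
  rcases isEmpty_or_nonempty ι with _ | _
  · rw [hom_ext (g₁ := F) (g₂ := 0) isEmptyElim]
    exact isPhantom_zero L u
  · obtain ⟨i, v, rfl⟩ := exists_of_comp_eq_of_finitePresentation u
    obtain ⟨P, _, _, _, α, β, hβα⟩ := hF i L v
    exact ⟨P, ‹_›, ‹_›, ‹_›, α, β, by rw [hβα, LinearMap.comp_assoc]⟩

end Module.DirectLimit

theorem isPhantom_directLimit_general
    {R : Type u} [Ring R] {ι : Type u} [Preorder ι] [IsDirected ι (· ≤ ·)] [DecidableEq ι]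
    (N M : ι → Type u)
    [∀ i, AddCommGroup (N i)] [∀ i, Module R (N i)]
    [∀ i, AddCommGroup (M i)] [∀ i, Module R (M i)]
    (g : ∀ i j, i ≤ j → N i →ₗ[R] N j) (h : ∀ i j, i ≤ j → M i →ₗ[R] M j)
    (hsysN : DirectedSystem N fun i j hij => g i j hij)
    (f : ∀ i, N i →ₗ[R] M i)
    (hph : ∀ i, IsPhantom (f i))
    (F : Module.DirectLimit N g →ₗ[R] Module.DirectLimit M h)
    (hF : ∀ i x, F (Module.DirectLimit.of R ι N g i x) =
      Module.DirectLimit.of R ι M h i (f i x)) :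
    IsPhantom F := by
  refine Module.DirectLimit.isPhantom_of_forall_isPhantom_comp_of F fun i => ?_
  have hFi : F ∘ₗ Module.DirectLimit.of R ι N g i = Module.DirectLimit.of R ι M h i ∘ₗ f i :=
    LinearMap.ext (hF i)
  rw [hFi]
  exact (hph i).linearMap_comp _

/-- The class of phantom morphisms is closed under direct limits: if `(f i : N i → M i)` is a
compatible family of phantom morphisms between directed systems, then the induced morphism
`lim f : lim N → lim M` between the direct limits is phantom. -/
theorem isPhantom_directLimit
    {R : Type u} [Ring R] {ι : Type u} [Preorder ι] [IsDirected ι (· ≤ ·)] [DecidableEq ι]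
    (N M : ι → Type u)
    [∀ i, AddCommGroup (N i)] [∀ i, Module R (N i)]
    [∀ i, AddCommGroup (M i)] [∀ i, Module R (M i)]
    (g : ∀ i j, i ≤ j → N i →ₗ[R] N j) (h : ∀ i j, i ≤ j → M i →ₗ[R] M j)
    (hsysN : DirectedSystem N fun i j hij => g i j hij)
    (hsysM : DirectedSystem M fun i j hij => h i j hij)
    (f : ∀ i, N i →ₗ[R] M i)
    (hcompat : ∀ i j (hij : i ≤ j), (f j).comp (g i j hij) = (h i j hij).comp (f i))
    (hph : ∀ i, IsPhantom (f i))
    (F : Module.DirectLimit N g →ₗ[R] Module.DirectLimit M h)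
    (hF : ∀ i x, F (Module.DirectLimit.of R ι N g i x) =
      Module.DirectLimit.of R ι M h i (f i x)) :
    IsPhantom F :=
  isPhantom_directLimit_general N M g h hsysN f hph F hF
end

section
/- Let R be a ring. There exists an infinite cardinal κ such that for every phantom morphism f : M → N of left R-modules, the collection S of pairs of submodules (M', N') with M' a pure submodule of M, N' a pure submodule of N, f(M') ⊆ N', the restriction f|_{M'} : M' → N' a phantom morphism, and both M' and N' generated by at most κ elements, is directed under componentwise inclusion, and ⋃_{(M',N') ∈ S} M' = M and ⋃_{(M',N') ∈ S} N' = N. -/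
universe u

/-- A pair of submodules `(M', N')` is a *good pair* for `f : M → N` (relative to `κ`) if
`M'` and `N'` are pure submodules, `f(M') ⊆ N'`, the restriction `f|_{M'} : M' → N'` is a
phantom morphism, and both `M'` and `N'` are generated by at most `κ` elements. -/
def IsGoodPair {R : Type u} [Ring R] {M N : Type u} [AddCommGroup M] [AddCommGroup N]
    [Module R M] [Module R N] (f : M →ₗ[R] N) (κ : Cardinal.{u})
    (p : Submodule R M × Submodule R N) : Prop :=
  IsPureSubmodule p.1 ∧ IsPureSubmodule p.2 ∧
  (∀ x ∈ p.1, f x ∈ p.2) ∧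
  (∀ hsub : ∀ x ∈ p.1, f x ∈ p.2, IsPhantom (f.restrict hsub)) ∧
  (∃ s : Set M, Cardinal.mk s ≤ κ ∧ Submodule.span R s = p.1) ∧
  (∃ t : Set N, Cardinal.mk t ≤ κ ∧ Submodule.span R t = p.2)

/-!
Take `κ = max ℵ₀ #R`. A submodule of cardinality at most `κ` becomes pure, without exceeding
`κ`, once we adjoin, countably many times over, a solution of each of the at most `κ` finite
linear systems over it that are solvable in the ambient module. A phantom map restricted to a
pure target `N'` stays phantom: since `L` is finitely generated, a factorization of `L → N`
through a projective module can be replaced by one through a finite free module, and purity of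
`N'` moves the images of its basis vectors into `N'`. Purifying first in `M`, then in `N` around
the image, puts any two good pairs, or any single element, inside a good pair.
-/

open Cardinal Submodule

namespace Cardinal

variable {κ : Cardinal.{u}}

theorem mk_fin_arrow_le {X : Type u} (hκ : ℵ₀ ≤ κ) (hX : #X ≤ κ) (n : ℕ) :
    #(Fin n → X) ≤ κ := by
  rw [mk_arrow, mk_fin, lift_natCast, lift_uzero]
  exact (power_le_power_right hX).trans (power_nat_le hκ)

theorem mk_sigma_le_of_countable {ι : Type} [Countable ι] {X : ι → Type u} (hκ : ℵ₀ ≤ κ)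
    (hX : ∀ i, #(X i) ≤ κ) : #(Σ i, X i) ≤ κ :=
  calc #(Σ i, X i) = sum fun i => #(X i) := mk_sigma _
    _ ≤ sum fun _ : ι => κ := sum_le_sum _ _ hX
    _ = lift.{u} #ι * κ := by rw [sum_const, lift_uzero]
    _ ≤ κ := mul_le_of_le hκ ((lift_le_aleph0.2 mk_le_aleph0).trans hκ) le_rfl

theorem mk_iUnion_le_of_countable_s6 {α : Type u} {ι : Type} [Countable ι] {s : ι → Set α}
    (hκ : ℵ₀ ≤ κ) (hs : ∀ i, #(s i) ≤ κ) : #(⋃ i, s i) ≤ κ :=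
  (mk_le_of_surjective (Set.sigmaToiUnion_surjective s)).trans (mk_sigma_le_of_countable hκ hs)

theorem mk_union_le_of_le {α : Type u} {s t : Set α} (hκ : ℵ₀ ≤ κ) (hs : #s ≤ κ)
    (ht : #t ≤ κ) : #(s ∪ t : Set α) ≤ κ :=
  (mk_union_le s t).trans (add_le_of_le hκ hs ht)

theorem mk_span_le {R M : Type u} [Ring R] [AddCommGroup M] [Module R M] {s : Set M}
    (hκ : ℵ₀ ≤ κ) (hR : #R ≤ κ) (hs : #s ≤ κ) : #(span R s) ≤ κ := by
  let sum : (Σ n : ℕ, (Fin n → R) × (Fin n → s)) → span R s := fun c =>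
    ⟨∑ i, c.2.1 i • (c.2.2 i : M), mem_span_set'.2 ⟨c.1, c.2.1, c.2.2, rfl⟩⟩
  have hsum : Function.Surjective sum := by
    rintro ⟨x, hx⟩
    obtain ⟨n, r, v, rfl⟩ := mem_span_set'.1 hx
    exact ⟨⟨n, r, v⟩, rfl⟩
  refine (mk_le_of_surjective hsum).trans (mk_sigma_le_of_countable hκ fun n => ?_)
  rw [mk_prod, lift_id, lift_id]
  exact mul_le_of_le hκ (mk_fin_arrow_le hκ hR n) (mk_fin_arrow_le hκ hs n)

end Cardinal

variable {R M : Type u} [Ring R] [AddCommGroup M] [Module R M]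

theorem IsPureSubmodule.exists_solution {P : Submodule R M} (hP : IsPureSubmodule P)
    {ι η : Type*} [Fintype ι] [Fintype η] (A : ι → η → R) (b : ι → P) (y : η → M)
    (hy : ∀ i, ∑ j, A i j • y j = (b i : M)) : ∃ z : η → P, ∀ i, ∑ j, A i j • z j = b i := by
  let eι := Fintype.equivFin ι
  let eη := Fintype.equivFin η
  obtain ⟨z, hz⟩ := hP _ _ (fun i j => A (eι.symm i) (eη.symm j)) (b ∘ eι.symm)
    ⟨y ∘ eη.symm, fun i => by
      simpa only [Function.comp_apply, eη.symm.sum_comp fun j => A (eι.symm i) j • y j] using hy _⟩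
  refine ⟨z ∘ eη, fun i => ?_⟩
  simpa [← eη.sum_comp] using hz (eι i)

namespace Submodule

/-- A finite linear system `A y = b` over `R` with constants `b` in `P`. -/
abbrev LinearSystem (P : Submodule R M) : Type u :=
  Σ mn : ℕ × ℕ, Matrix (Fin mn.1) (Fin mn.2) R × (Fin mn.1 → P)

def LinearSystem.IsSolution {P : Submodule R M} (q : LinearSystem P) (y : Fin q.1.2 → M) :
    Prop :=
  ∀ i, ∑ j, q.2.1 i j • y j = (q.2.2 i : M)

-- On an unsolvable system `Classical.epsilon` returns junk; adjoining it is harmless.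
noncomputable def adjoinSolutions (P : Submodule R M) : Submodule R M :=
  P ⊔ span R (⋃ q : P.LinearSystem, Set.range (Classical.epsilon q.IsSolution))

theorem le_adjoinSolutions (P : Submodule R M) : P ≤ P.adjoinSolutions := le_sup_left

theorem exists_solution_in_adjoinSolutions {P : Submodule R M} {m n : ℕ}
    (A : Matrix (Fin m) (Fin n) R) (b : Fin m → P)
    (h : ∃ y : Fin n → M, ∀ i, ∑ j, A i j • y j = (b i : M)) :
    ∃ y : Fin n → M, (∀ j, y j ∈ P.adjoinSolutions) ∧ ∀ i, ∑ j, A i j • y j = (b i : M) :=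
  let q : P.LinearSystem := ⟨(m, n), A, b⟩
  ⟨Classical.epsilon q.IsSolution,
    fun j => le_sup_right (α := Submodule R M) <| subset_span <|
      Set.mem_iUnion.2 ⟨q, Set.mem_range_self j⟩,
    Classical.epsilon_spec (p := q.IsSolution) h⟩

theorem mk_adjoinSolutions_le {κ : Cardinal.{u}} (hκ : ℵ₀ ≤ κ) (hR : #R ≤ κ)
    {P : Submodule R M} (hP : #P ≤ κ) : #P.adjoinSolutions ≤ κ := by
  have hsystems : #P.LinearSystem ≤ κ := mk_sigma_le_of_countable hκ fun mn => by
    rw [mk_prod, lift_id, lift_id]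
    exact mul_le_of_le hκ (mk_fin_arrow_le hκ (mk_fin_arrow_le hκ hR _) _)
      (mk_fin_arrow_le hκ hP _)
  have hsolutions :
      #(⋃ q : P.LinearSystem, Set.range (Classical.epsilon q.IsSolution)) ≤ κ :=
    (mk_iUnion_le _).trans <| mul_le_of_le hκ hsystems <| ciSup_le' fun _ =>
      (lt_aleph0_of_finite _).le.trans hκ
  have hspan : P.adjoinSolutions =
      span R (P ∪ ⋃ q : P.LinearSystem, Set.range (Classical.epsilon q.IsSolution)) := by
    rw [span_union, span_eq, adjoinSolutions]
  rw [hspan]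
  exact mk_span_le hκ hR (mk_union_le_of_le hκ hP hsolutions)

noncomputable def purification (P : Submodule R M) : Submodule R M :=
  ⨆ k : ℕ, adjoinSolutions^[k] P

theorem monotone_iterate_adjoinSolutions (P : Submodule R M) :
    Monotone fun k : ℕ => adjoinSolutions^[k] P :=
  monotone_nat_of_le_succ fun k => by
    rw [Function.iterate_succ_apply']
    exact le_adjoinSolutions _

theorem le_purification (P : Submodule R M) : P ≤ P.purification :=
  le_iSup (fun k : ℕ => adjoinSolutions^[k] P) 0

theorem mk_purification_le {κ : Cardinal.{u}} (hκ : ℵ₀ ≤ κ) (hR : #R ≤ κ)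
    {P : Submodule R M} (hP : #P ≤ κ) : #P.purification ≤ κ := by
  have hstage : ∀ k : ℕ, #(adjoinSolutions^[k] P) ≤ κ := by
    intro k
    induction k with
    | zero => exact hP
    | succ k ih =>
      rw [Function.iterate_succ_apply']
      exact mk_adjoinSolutions_le hκ hR ih
  rw [← SetLike.coe_sort_coe, purification,
    coe_iSup_of_directed _ (monotone_iterate_adjoinSolutions P).directed_le]
  exact mk_iUnion_le_of_countable_s6 hκ hstage

theorem isPure_purification (P : Submodule R M) : IsPureSubmodule P.purification := by
  intro m n A b hsolvable
  have hmono := monotone_iterate_adjoinSolutions P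
  have hstage : ∀ i, ∃ k : ℕ, (b i : M) ∈ adjoinSolutions^[k] P := fun i =>
    (mem_iSup_of_directed _ hmono.directed_le).1 (b i).2
  choose k hk using hstage
  obtain ⟨K, hK⟩ := Finite.exists_le k
  obtain ⟨y, hy, hsol⟩ := exists_solution_in_adjoinSolutions (P := adjoinSolutions^[K] P) A
    (fun i => ⟨b i, hmono (hK i) (hk i)⟩) hsolvable
  have hyP : ∀ j, y j ∈ P.purification := fun j =>
    le_iSup (fun k : ℕ => adjoinSolutions^[k] P) (K + 1)
      (by rw [Function.iterate_succ_apply']; exact hy j)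
  exact ⟨fun j => ⟨y j, hyP j⟩, fun i => Subtype.ext (by simpa using hsol i)⟩

end Submodule

theorem LinearMap.exists_finite_free_factorization {L P : Type u} [AddCommGroup L] [Module R L]
    [Module.Finite R L] [AddCommGroup P] [Module R P] [Module.Projective R P]
    (α : L →ₗ[R] P) :
    ∃ (ι : Type u) (_ : Fintype ι) (α' : L →ₗ[R] ι → R) (β : (ι → R) →ₗ[R] P), β ∘ₗ α' = α := by
  classical
  obtain ⟨s, hs⟩ := Module.projective_def'.1 ‹Module.Projective R P›
  obtain ⟨k, ℓ, hℓ⟩ := Module.Finite.exists_fin (R := R) (M := L)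
  let T : Finset P := Finset.univ.biUnion fun i => (s (α (ℓ i))).support
  refine ⟨T, inferInstance, (LinearMap.pi fun t : T => Finsupp.lapply (t : P)) ∘ₗ s ∘ₗ α,
    Fintype.linearCombination R fun t : T => (t : P), LinearMap.ext_on_range hℓ fun i => ?_⟩
  have hsupport : (s (α (ℓ i))).support ⊆ T :=
    Finset.subset_biUnion_of_mem (fun i => (s (α (ℓ i))).support) (Finset.mem_univ i)
  calc ∑ t : T, s (α (ℓ i)) t • (t : P)
      = Finsupp.linearCombination R _root_.id (s (α (ℓ i))) := by
        rw [Finsupp.linearCombination_apply, Finsupp.sum_of_support_subset _ hsupport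
          (fun p (r : R) => r • _root_.id p) (fun p _ => zero_smul R (_root_.id p)),
          ← Finset.sum_coe_sort T]
        rfl
    _ = α (ℓ i) := LinearMap.congr_fun hs _

theorem IsPureSubmodule.exists_lift {N L : Type u} [AddCommGroup N] [Module R N]
    [AddCommGroup L] [Module R L] [Module.Finite R L] {N' : Submodule R N}
    (hN' : IsPureSubmodule N') {ι : Type u} [Fintype ι] (α : L →ₗ[R] ι → R)
    (β : (ι → R) →ₗ[R] N) (h : L →ₗ[R] N') (hβα : β ∘ₗ α = N'.subtype ∘ₗ h) :
    ∃ β' : (ι → R) →ₗ[R] N', β' ∘ₗ α = h := by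
  classical
  obtain ⟨k, ℓ, hℓ⟩ := Module.Finite.exists_fin (R := R) (M := L)
  obtain ⟨z, hz⟩ := hN'.exists_solution (fun i j => α (ℓ i) j) (fun i => h (ℓ i))
    (fun j => β (Pi.single j 1)) fun i =>
      calc ∑ j, α (ℓ i) j • β (Pi.single j 1) = β (α (ℓ i)) := by
            conv_rhs => rw [pi_eq_sum_univ' (α (ℓ i))]
            simp only [map_sum, map_smul]
        _ = h (ℓ i) := LinearMap.congr_fun hβα (ℓ i)
  exact ⟨Fintype.linearCombination R z, LinearMap.ext_on_range hℓ hz⟩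

theorem IsPhantom.restrict {N : Type u} [AddCommGroup N] [Module R N] {f : M →ₗ[R] N}
    (hf : IsPhantom f) {M' : Submodule R M} {N' : Submodule R N} (hN' : IsPureSubmodule N')
    (hsub : ∀ x ∈ M', f x ∈ N') : IsPhantom (f.restrict hsub) := by
  intro L _ _ _ g
  obtain ⟨P, _, _, _, α, β, hβα⟩ := hf L (M'.subtype ∘ₗ g)
  obtain ⟨ι, _, α', γ, rfl⟩ := α.exists_finite_free_factorization
  obtain ⟨β', hβ'⟩ := hN'.exists_lift α' (β ∘ₗ γ) (f.restrict hsub ∘ₗ g) <| by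
    rw [LinearMap.comp_assoc, hβα]
    rfl
  exact ⟨ι → R, inferInstance, inferInstance, inferInstance, α', β', hβ'⟩

theorem exists_isGoodPair_superset {N : Type u} [AddCommGroup N] [Module R N]
    {f : M →ₗ[R] N} (hf : IsPhantom f) {κ : Cardinal.{u}} (hκ : ℵ₀ ≤ κ) (hR : #R ≤ κ)
    {S : Set M} {T : Set N} (hS : #S ≤ κ) (hT : #T ≤ κ) :
    ∃ p : Submodule R M × Submodule R N, IsGoodPair f κ p ∧ S ⊆ p.1 ∧ T ⊆ p.2 := by
  set M' := (span R S).purification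
  set N' := (span R (T ∪ f '' M')).purification
  have hM' : #M' ≤ κ := mk_purification_le hκ hR (mk_span_le hκ hR hS)
  have hN' : #N' ≤ κ := mk_purification_le hκ hR <| mk_span_le hκ hR <|
    mk_union_le_of_le hκ hT (mk_image_le.trans hM')
  have hfM' : ∀ x ∈ M', f x ∈ N' := fun x hx =>
    le_purification _ (subset_span (Or.inr ⟨x, hx, rfl⟩))
  refine ⟨(M', N'), ⟨isPure_purification _, isPure_purification _, hfM',
    fun _ => hf.restrict (isPure_purification _) _, ⟨M', hM', span_eq _⟩, ⟨N', hN', span_eq _⟩⟩,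
    subset_span.trans (le_purification _),
    Set.subset_union_left.trans (subset_span.trans (le_purification _))⟩

/-- There is an infinite cardinal `κ` such that every phantom morphism `f : M → N` is the
directed union of its pure phantom subrepresentations of type `κ`: the collection of good
pairs is directed under componentwise inclusion and its unions exhaust `M` and `N`. -/
theorem phantom_directed_union_of_type_kappa {R : Type u} [Ring R] :
    ∃ κ : Cardinal.{u}, Cardinal.aleph0 ≤ κ ∧
      ∀ (M N : Type u) [AddCommGroup M] [AddCommGroup N] [Module R M] [Module R N]
        (f : M →ₗ[R] N), IsPhantom f →
        DirectedOn (· ≤ ·) {p : Submodule R M × Submodule R N | IsGoodPair f κ p} ∧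
        (∀ x : M, ∃ p : Submodule R M × Submodule R N, IsGoodPair f κ p ∧ x ∈ p.1) ∧
        (∀ y : N, ∃ p : Submodule R M × Submodule R N, IsGoodPair f κ p ∧ y ∈ p.2) := by
  have hκ : ℵ₀ ≤ max ℵ₀ #R := le_max_left _ _
  have hR : #R ≤ max ℵ₀ #R := le_max_right _ _
  refine ⟨max ℵ₀ #R, hκ, fun M N _ _ _ _ f hf => ⟨?_, fun x => ?_, fun y => ?_⟩⟩
  · rintro ⟨_, _⟩ ⟨-, -, -, -, ⟨s, hs, rfl⟩, ⟨t, ht, rfl⟩⟩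
      ⟨_, _⟩ ⟨-, -, -, -, ⟨s', hs', rfl⟩, ⟨t', ht', rfl⟩⟩
    obtain ⟨r, hr, hsr, htr⟩ := exists_isGoodPair_superset hf hκ hR
      (mk_union_le_of_le hκ hs hs') (mk_union_le_of_le hκ ht ht')
    exact ⟨r, hr, ⟨span_le.2 (Set.subset_union_left.trans hsr),
      span_le.2 (Set.subset_union_left.trans htr)⟩, ⟨span_le.2 (Set.subset_union_right.trans hsr),
      span_le.2 (Set.subset_union_right.trans htr)⟩⟩
  · have hx : #({x} : Set M) ≤ max ℵ₀ #R := (mk_singleton x).le.trans (one_le_aleph0.trans hκ)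
    obtain ⟨p, hp, hxp, -⟩ := exists_isGoodPair_superset hf hκ hR hx (T := ∅) (by simp)
    exact ⟨p, hp, hxp rfl⟩
  · have hy : #({y} : Set N) ≤ max ℵ₀ #R := (mk_singleton y).le.trans (one_le_aleph0.trans hκ)
    obtain ⟨p, hp, -, hyp⟩ := exists_isGoodPair_superset hf hκ hR (S := ∅) (by simp) hy
    exact ⟨p, hp, hyp rfl⟩
end

section
/- Let R be a ring, let φ : M → N be a surjective phantom morphism of left R-modules with kernel inclusion u : K → M, and let v : K → K' be a pure monomorphism. Form the pushout of u along v, obtaining a commutative square u' : K' → X, v' : M → X with u' ∘ v = v' ∘ u, together with the induced surjection φ' : X → N satisfying φ' ∘ v' = φ and φ' ∘ u' = 0 (so that 0 → K' → X → N → 0 is exact). Then φ' is a phantom morphism. -/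
/-!
Since `v'` is injective and the rows are exact, `u'` induces an isomorphism
`K' ⧸ v(K) ≃ X ⧸ v'(M)`. Purity of `v(K)` means that every map from a finitely presented module
into `K' ⧸ v(K)` lifts to `K'`. So for finitely presented `L`, any `g : L → X` splits as
`g = u' ∘ k + v' ∘ g₁` with `k : L → K'`, `g₁ : L → M`; then `φ' ∘ g = φ ∘ g₁`, which factors
through a projective module because `φ` is phantom.
-/

universe u

open LinearMap

theorem Function.Exact.exists_comp_eq_of_comp_eq_zero {R : Type*} [Ring R]
    {M N P Q : Type*} [AddCommGroup M] [AddCommGroup N] [AddCommGroup P] [AddCommGroup Q]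
    [Module R M] [Module R N] [Module R P] [Module R Q] {f : M →ₗ[R] N} {g : N →ₗ[R] P}
    (hfg : Function.Exact f g) (hg : Function.Surjective g) {h : N →ₗ[R] Q}
    (hh : h ∘ₗ f = 0) : ∃ k : P →ₗ[R] Q, k ∘ₗ g = h :=
  ⟨(range f).liftQ h (range_le_ker_iff.mpr hh) ∘ₗ (hfg.linearEquivOfSurjective hg).symm,
    by ext x; simp⟩

theorem LinearMap.exists_comp_eq_of_range_le {R : Type*} [Ring R]
    {L M X : Type*} [AddCommGroup L] [AddCommGroup M] [AddCommGroup X]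
    [Module R L] [Module R M] [Module R X] {i : M →ₗ[R] X} (hi : Function.Injective i)
    {f : L →ₗ[R] X} (hf : range f ≤ range i) : ∃ g : L →ₗ[R] M, i ∘ₗ g = f :=
  ⟨(LinearEquiv.ofInjective i hi).symm ∘ₗ f.codRestrict (range i) (fun l => hf ⟨l, rfl⟩),
    by ext l; simp⟩

theorem exists_comp_eq_of_isPureSubmodule_ker {R : Type u} [Ring R] {M : Type u} {L Q : Type*}
    [AddCommGroup L] [AddCommGroup M] [AddCommGroup Q] [Module R L] [Module R M] [Module R Q]
    [Module.FinitePresentation R L] (π : M →ₗ[R] Q) (hπ : Function.Surjective π)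
    (hpure : IsPureSubmodule (ker π)) (f : L →ₗ[R] Q) : ∃ k : L →ₗ[R] M, π ∘ₗ k = f := by
  obtain ⟨n, m, p, c, hp, hcp⟩ := Module.FinitePresentation.exists_fin' R L
  choose y hy using fun j : Fin n => hπ (f (p (Pi.single j 1)))
  let A : Matrix (Fin m) (Fin n) R := fun i j => c (Pi.single i 1) j
  have hc : ∀ i, ∑ j, A i j • (Pi.single j 1 : Fin n → R) = c (Pi.single i 1) := by
    intro i; ext j; simp [A, Pi.single_apply]
  have hrel : ∀ i, ∑ j, A i j • y j ∈ ker π := by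
    intro i
    calc π (∑ j, A i j • y j) = f (p (∑ j, A i j • Pi.single j 1)) := by simp [hy]
      _ = 0 := by rw [hc, hcp.apply_apply_eq_zero, map_zero]
  -- The lifts `y` satisfy the relations of `L` only modulo `ker π`; purity corrects them.
  obtain ⟨z, hz⟩ := hpure m n A (fun i => ⟨_, hrel i⟩) ⟨y, fun i => rfl⟩
  let h : (Fin n → R) →ₗ[R] M := Fintype.linearCombination R (fun j => y j - z j)
  have hhc : h ∘ₗ c = 0 := by
    refine pi_ext' fun i => ext_ring ?_
    have hzi := congrArg Subtype.val (hz i)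
    simp only [Submodule.coe_sum, Submodule.coe_smul] at hzi
    simp [h, Fintype.linearCombination_apply, smul_sub, hzi, A]
  obtain ⟨k, hk⟩ := hcp.exists_comp_eq_of_comp_eq_zero hp hhc
  refine ⟨k, (cancel_right hp).mp (pi_ext' fun j => ext_ring ?_)⟩
  have hkj : k (p (Pi.single j 1)) = y j - z j := by
    rw [← comp_apply, hk]
    simp [h, Fintype.linearCombination_apply, Pi.single_apply]
  have hzj : π (z j) = 0 := (z j).2
  simp [hkj, hzj, hy]

section ExactSquare

variable {R : Type*} [Ring R] {M N K K' X : Type*}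
    [AddCommGroup M] [AddCommGroup N] [AddCommGroup K] [AddCommGroup K'] [AddCommGroup X]
    [Module R M] [Module R N] [Module R K] [Module R K'] [Module R X]
    {φ : M →ₗ[R] N} {u : K →ₗ[R] M} {v : K →ₗ[R] K'} {u' : K' →ₗ[R] X} {v' : M →ₗ[R] X}
    {φ' : X →ₗ[R] N}

theorem exists_preimage_of_apply_eq_apply (huker : ker φ ≤ range u)
    (hsquare : u' ∘ₗ v = v' ∘ₗ u) (hφ'v' : φ' ∘ₗ v' = φ) (hφ'u' : φ' ∘ₗ u' = 0)
    (hu' : Function.Injective u') {k' : K'} {x : M} (h : u' k' = v' x) :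
    ∃ k, v k = k' ∧ u k = x := by
  have hx : φ x = 0 := by
    rw [← hφ'v', comp_apply, ← h, ← comp_apply, hφ'u', LinearMap.zero_apply]
  obtain ⟨k, rfl⟩ := huker hx
  refine ⟨k, hu' ?_, rfl⟩
  rw [← comp_apply, hsquare, comp_apply, h]

theorem injective_of_exact_square (hv : Function.Injective v) (huker : ker φ ≤ range u)
    (hsquare : u' ∘ₗ v = v' ∘ₗ u) (hφ'v' : φ' ∘ₗ v' = φ) (hφ'u' : φ' ∘ₗ u' = 0)
    (hu' : Function.Injective u') : Function.Injective v' := by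
  refine (injective_iff_map_eq_zero v').mpr fun x hx => ?_
  obtain ⟨k, hk, rfl⟩ := exists_preimage_of_apply_eq_apply huker hsquare hφ'v' hφ'u' hu'
    (show u' 0 = v' x by rw [map_zero, hx])
  rw [hv (hk.trans (map_zero v).symm), map_zero]

theorem ker_mkQ_comp_eq_range (huker : ker φ ≤ range u)
    (hsquare : u' ∘ₗ v = v' ∘ₗ u) (hφ'v' : φ' ∘ₗ v' = φ) (hφ'u' : φ' ∘ₗ u' = 0)
    (hu' : Function.Injective u') : ker ((range v').mkQ ∘ₗ u') = range v := by
  ext k'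
  simp only [mem_ker, comp_apply, Submodule.mkQ_apply, Submodule.Quotient.mk_eq_zero, mem_range]
  constructor
  · rintro ⟨x, hx⟩
    obtain ⟨k, hk, -⟩ := exists_preimage_of_apply_eq_apply huker hsquare hφ'v' hφ'u' hu' hx.symm
    exact ⟨k, hk⟩
  · rintro ⟨k, rfl⟩
    exact ⟨u k, by rw [← comp_apply, ← hsquare, comp_apply]⟩

theorem surjective_mkQ_comp (hφ : Function.Surjective φ) (hexact : ker φ' ≤ range u')
    (hφ'v' : φ' ∘ₗ v' = φ) : Function.Surjective ((range v').mkQ ∘ₗ u') := by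
  refine Submodule.Quotient.mk_surjective _ |>.forall.mpr fun x => ?_
  obtain ⟨m, hm⟩ := hφ (φ' x)
  obtain ⟨k', hk'⟩ : x - v' m ∈ range u' := hexact <| by
    rw [mem_ker, map_sub, ← comp_apply φ', hφ'v', hm, sub_self]
  refine ⟨k', (Submodule.Quotient.eq _).mpr ?_⟩
  rw [hk', sub_sub_cancel_left]
  exact neg_mem ⟨m, rfl⟩

end ExactSquare

theorem isPhantom_pushout_general {R : Type u} [Ring R]
    {M N K K' X : Type u}
    [AddCommGroup M] [AddCommGroup N] [AddCommGroup K] [AddCommGroup K'] [AddCommGroup X]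
    [Module R M] [Module R N] [Module R K] [Module R K'] [Module R X]
    (φ : M →ₗ[R] N) (hφsurj : Function.Surjective φ) (hφ : IsPhantom φ)
    (u : K →ₗ[R] M) (huker : LinearMap.range u = LinearMap.ker φ)
    (v : K →ₗ[R] K') (hv : Function.Injective v)
    (hvpure : IsPureSubmodule (LinearMap.range v))
    (u' : K' →ₗ[R] X) (v' : M →ₗ[R] X)
    (hsquare : u'.comp v = v'.comp u)
    (φ' : X →ₗ[R] N)
    (hφ'v' : φ'.comp v' = φ) (hφ'u' : φ'.comp u' = 0)
    (hu' : Function.Injective u')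
    (hexact : LinearMap.range u' = LinearMap.ker φ') :
    IsPhantom φ' := by
  intro L _ _ _ g
  obtain ⟨k, hk⟩ := exists_comp_eq_of_isPureSubmodule_ker ((range v').mkQ ∘ₗ u')
    (surjective_mkQ_comp hφsurj hexact.ge hφ'v')
    (ker_mkQ_comp_eq_range huker.ge hsquare hφ'v' hφ'u' hu' ▸ hvpure) ((range v').mkQ ∘ₗ g)
  have hrange : range (g - u' ∘ₗ k) ≤ range v' := by
    rintro _ ⟨l, rfl⟩
    rw [← Submodule.Quotient.mk_eq_zero, LinearMap.sub_apply, Submodule.Quotient.mk_sub,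
      sub_eq_zero]
    exact (congr($hk l)).symm
  obtain ⟨g₁, hg₁⟩ := exists_comp_eq_of_range_le
    (injective_of_exact_square hv huker.ge hsquare hφ'v' hφ'u' hu') hrange
  obtain ⟨P, _, _, _, α, β, hαβ⟩ := hφ L g₁
  refine ⟨P, ‹_›, ‹_›, ‹_›, α, β, ?_⟩
  rw [hαβ, ← hφ'v', comp_assoc, hg₁, comp_sub, ← comp_assoc, hφ'u', zero_comp, sub_zero]

/-- If `φ : M → N` is a surjective phantom morphism with kernel inclusion `u : K → M` and
`v : K → K'` is a pure monomorphism, then in the pushout square `u' ∘ v = v' ∘ u` (with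
induced surjection `φ' : X → N` satisfying `φ' ∘ v' = φ`, `φ' ∘ u' = 0` and
`0 → K' → X → N → 0` exact), the morphism `φ'` is also phantom. -/
theorem isPhantom_pushout {R : Type u} [Ring R]
    {M N K K' X : Type u}
    [AddCommGroup M] [AddCommGroup N] [AddCommGroup K] [AddCommGroup K'] [AddCommGroup X]
    [Module R M] [Module R N] [Module R K] [Module R K'] [Module R X]
    (φ : M →ₗ[R] N) (hφsurj : Function.Surjective φ) (hφ : IsPhantom φ)
    (u : K →ₗ[R] M) (hu : Function.Injective u) (huker : LinearMap.range u = LinearMap.ker φ)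
    (v : K →ₗ[R] K') (hv : Function.Injective v)
    (hvpure : IsPureSubmodule (LinearMap.range v))
    (u' : K' →ₗ[R] X) (v' : M →ₗ[R] X)
    (hsquare : u'.comp v = v'.comp u)
    (φ' : X →ₗ[R] N)
    (hφ'v' : φ'.comp v' = φ) (hφ'u' : φ'.comp u' = 0)
    (hu' : Function.Injective u')
    (hexact : LinearMap.range u' = LinearMap.ker φ')
    (hφ'surj : Function.Surjective φ') :
    IsPhantom φ' :=
  isPhantom_pushout_general φ hφsurj hφ u huker v hv hvpure u' v' hsquare φ' hφ'v' hφ'u' hu' hexact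
end

section
/- Let R be a ring, let M be a left R-module, and let φ : F → M be a phantom precover of M, i.e., φ is a phantom morphism and every phantom morphism ψ : G → M factors through φ. Then φ is surjective. -/
universe u

/-! A phantom precover receives a factorization of the surjection `(M →₀ R) → M`, which is
phantom because its source is projective; hence it is itself surjective. -/

theorem isPhantom_of_projective {R : Type u} [Ring R] {P N : Type u} [AddCommGroup P]
    [AddCommGroup N] [Module R P] [Module R N] [Module.Projective R P] (f : P →ₗ[R] N) :
    IsPhantom f :=
  fun _ _ _ _ g => ⟨P, inferInstance, inferInstance, inferInstance, g, f, rfl⟩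

theorem surjective_of_phantom_precover_general {R : Type u} [Ring R]
    {F M : Type u} [AddCommGroup F] [AddCommGroup M] [Module R F] [Module R M]
    (φ : F →ₗ[R] M)
    (hpre : ∀ (G : Type u) [AddCommGroup G] [Module R G] (ψ : G →ₗ[R] M),
      IsPhantom ψ → ∃ h : G →ₗ[R] F, φ.comp h = ψ) :
    Function.Surjective φ := by
  let π : (M →₀ R) →ₗ[R] M := Finsupp.linearCombination R id
  obtain ⟨h, hφh⟩ := hpre (M →₀ R) π (isPhantom_of_projective π)
  apply Function.Surjective.of_comp (g := h)
  rw [← LinearMap.coe_comp, hφh]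
  exact Finsupp.linearCombination_id_surjective R M

/-- Every phantom precover is surjective: if `φ : F → M` is a phantom morphism through which
every phantom morphism `ψ : G → M` factors, then `φ` is surjective. -/
theorem surjective_of_phantom_precover {R : Type u} [Ring R]
    {F M : Type u} [AddCommGroup F] [AddCommGroup M] [Module R F] [Module R M]
    (φ : F →ₗ[R] M) (hφ : IsPhantom φ)
    (hpre : ∀ (G : Type u) [AddCommGroup G] [Module R G] (ψ : G →ₗ[R] M),
      IsPhantom ψ → ∃ h : G →ₗ[R] F, φ.comp h = ψ) :
    Function.Surjective φ :=
  surjective_of_phantom_precover_general φ hpre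
end

section
/- Let R be a ring, let f : M → N be a phantom morphism of left R-modules, and let M' ⊆ M and N' ⊆ N be pure submodules with f(M') ⊆ N'. Then the induced morphism f̄ : M/M' → N/N' on the quotient modules is a phantom morphism. -/
universe u

/-!
The induced map precomposed with `M → M/M'` is `N → N/N'` composed with `f`, which is phantom
because phantom morphisms are closed under postcomposition. Phantomness then descends along
`M → M/M'`: by purity of `M'`, every map from a finitely presented module to `M/M'` lifts to `M`
(lift the images of the generators, then correct the lifts by a solution in `M'` of the
relations).
-/

open Module

section Purity

variable {R : Type u} [Ring R] {M : Type u} [AddCommGroup M] [Module R M] {P : Submodule R M}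

theorem IsPureSubmodule.exists_linearCombination_sub_eq_zero (hP : IsPureSubmodule P)
    {ι κ : Type*} [Fintype ι] [Fintype κ] (rel : ι → κ →₀ R) (y : κ → M)
    (hy : ∀ i, Finsupp.linearCombination R y (rel i) ∈ P) :
    ∃ z : κ → P, ∀ i, Finsupp.linearCombination R (y - fun k ↦ (z k : M)) (rel i) = 0 := by
  have eι := Fintype.equivFin ι
  have eκ := Fintype.equivFin κ
  have sum_eq (i : ι) (x : κ → M) : Finsupp.linearCombination R x (rel i) =
      ∑ j, rel i (eκ.symm j) • x (eκ.symm j) := by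
    rw [Finsupp.linearCombination_apply, Finsupp.sum_fintype _ _ (by simp)]
    exact (eκ.symm.sum_comp _).symm
  obtain ⟨z, hz⟩ := hP _ _ (fun i j ↦ rel (eι.symm i) (eκ.symm j))
    (fun i ↦ ⟨_, hy (eι.symm i)⟩) ⟨fun j ↦ y (eκ.symm j), fun i ↦ (sum_eq _ y).symm⟩
  refine ⟨fun k ↦ z (eκ k), fun i ↦ ?_⟩
  rw [sum_eq]
  simp only [Pi.sub_apply, smul_sub, Finset.sum_sub_distrib, sub_eq_zero]
  simpa [sum_eq] using (congrArg Subtype.val (hz (eι i))).symm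

theorem IsPureSubmodule.exists_lift_of_finitePresentation (hP : IsPureSubmodule P)
    {L : Type u} [AddCommGroup L] [Module R L] [FinitePresentation R L] (g : L →ₗ[R] M ⧸ P) :
    ∃ g' : L →ₗ[R] M, P.mkQ ∘ₗ g' = g := by
  obtain ⟨pres, _, _⟩ := finitePresentation_iff_exists_presentation.{0, 0}.mp ‹_›
  have := Fintype.ofFinite pres.G
  have := Fintype.ofFinite pres.R
  choose y hy using fun γ ↦ P.mkQ_surjective (g (pres.var γ))
  have hrel (r : pres.R) : Finsupp.linearCombination R y (pres.relation r) ∈ P := by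
    rw [← Submodule.Quotient.mk_eq_zero, ← P.mkQ_apply, Finsupp.apply_linearCombination,
      show ⇑P.mkQ ∘ y = g ∘ pres.var from funext hy, ← Finsupp.apply_linearCombination,
      pres.linearCombination_var_relation, map_zero]
  obtain ⟨z, hz⟩ := hP.exists_linearCombination_sub_eq_zero pres.relation y hrel
  let s : pres.Solution M := ⟨y - fun γ ↦ (z γ : M), hz⟩
  refine ⟨pres.desc s, pres.postcomp_injective (Relations.Solution.ext (funext fun γ ↦ ?_))⟩
  simp [s, ← hy]

end Purity

theorem IsPhantom.comp_left {R : Type u} [Ring R] {M N K : Type u} [AddCommGroup M]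
    [AddCommGroup N] [AddCommGroup K] [Module R M] [Module R N] [Module R K]
    {f : M →ₗ[R] N} (hf : IsPhantom f) (h : N →ₗ[R] K) : IsPhantom (h ∘ₗ f) := by
  intro L _ _ _ g
  obtain ⟨P, _, _, _, α, β, hβα⟩ := hf L g
  exact ⟨P, _, _, ‹_›, α, h ∘ₗ β, by rw [LinearMap.comp_assoc, hβα, LinearMap.comp_assoc]⟩

theorem IsPhantom.of_comp_mkQ {R : Type u} [Ring R] {M N : Type u} [AddCommGroup M]
    [AddCommGroup N] [Module R M] [Module R N] {M' : Submodule R M} (hM' : IsPureSubmodule M')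
    {φ : M ⧸ M' →ₗ[R] N} (hφ : IsPhantom (φ ∘ₗ M'.mkQ)) : IsPhantom φ := by
  intro L _ _ _ g
  obtain ⟨g', rfl⟩ := hM'.exists_lift_of_finitePresentation g
  simpa only [LinearMap.comp_assoc] using hφ L g'

theorem isPhantom_quotient_of_pure_general {R : Type u} [Ring R]
    {M N : Type u} [AddCommGroup M] [AddCommGroup N] [Module R M] [Module R N]
    (f : M →ₗ[R] N) (hf : IsPhantom f)
    (M' : Submodule R M) (N' : Submodule R N)
    (hM' : IsPureSubmodule M')
    (hmap : M' ≤ N'.comap f) :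
    IsPhantom (Submodule.mapQ M' N' f hmap) := by
  refine IsPhantom.of_comp_mkQ hM' ?_
  rw [Submodule.mapQ_mkQ]
  exact hf.comp_left N'.mkQ

/-- If `f : M → N` is a phantom morphism and `M' ⊆ M`, `N' ⊆ N` are pure submodules with
`f(M') ⊆ N'`, then the induced morphism `M/M' → N/N'` is phantom. -/
theorem isPhantom_quotient_of_pure {R : Type u} [Ring R]
    {M N : Type u} [AddCommGroup M] [AddCommGroup N] [Module R M] [Module R N]
    (f : M →ₗ[R] N) (hf : IsPhantom f)
    (M' : Submodule R M) (N' : Submodule R N)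
    (hM' : IsPureSubmodule M') (hN' : IsPureSubmodule N')
    (hmap : M' ≤ N'.comap f) :
    IsPhantom (Submodule.mapQ M' N' f hmap) :=
  isPhantom_quotient_of_pure_general f hf M' N' hM' hmap
end
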